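/- arXiv:2010.00057 — 2 statements merged into one kernel-verified Lean document; each statement's English description precedes it below -/
import Mathlib

section
/- Let U, V be real Hilbert spaces, B : U × V → ℝ a bounded bilinear form with trivial kernel, and ‖·‖_B the energy norm on U. Let Uʰ ⊆ U be a subspace and suppose uʰ ∈ Uʰ satisfies B(u − uʰ, vʰ) = 0 for all vʰ in the 'optimal test space' Vʰ = {p(wʰ) : wʰ ∈ Uʰ}, where p(w) ∈ V is the Riesz representer of v ↦ B(w,v). Then uʰ is a best approximation of u from Uʰ in the energy norm: ‖u − uʰ‖_B ≤ ‖u − wʰ‖_B for all wʰ ∈ Uʰ. -/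
open RealInnerProductSpace

/-- Energy norm `‖u‖_B = sup_{v ≠ 0} |B u v| / ‖v‖`. -/
noncomputable def energyNorm {U V : Type*} [NormedAddCommGroup U] [NormedAddCommGroup V]
    (B : U → V → ℝ) (u : U) : ℝ :=
  sSup {r : ℝ | ∃ v : V, v ≠ 0 ∧ r = |B u v| / ‖v‖}

lemma energyNorm_eq_norm_riesz {U V : Type*} [NormedAddCommGroup U]
    [NormedAddCommGroup V] [InnerProductSpace ℝ V]
    (B : U → V → ℝ) (p : U → V) (hp : ∀ (w : U) (v : V), ⟪p w, v⟫ = B w v) (w : U) :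
    energyNorm B w = ‖p w‖ := by
  unfold energyNorm
  have hub : ∀ r ∈ {r : ℝ | ∃ v : V, v ≠ 0 ∧ r = |B w v| / ‖v‖}, r ≤ ‖p w‖ := by
    rintro r ⟨v, hv, rfl⟩
    rw [← hp]
    have hcs := abs_real_inner_le_norm (p w) v
    have hvpos : (0:ℝ) < ‖v‖ := norm_pos_iff.mpr hv
    rw [div_le_iff₀ hvpos]
    exact hcs
  by_cases hpw : p w = 0
  · rw [hpw, norm_zero]
    have hsub : {r : ℝ | ∃ v : V, v ≠ 0 ∧ r = |B w v| / ‖v‖} ⊆ {0} := by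
      rintro r ⟨v, hv, rfl⟩
      simp only [Set.mem_singleton_iff]
      rw [← hp, hpw, inner_zero_left, abs_zero, zero_div]
    rcases Set.eq_empty_or_nonempty {r : ℝ | ∃ v : V, v ≠ 0 ∧ r = |B w v| / ‖v‖} with h | h
    · rw [h, Real.sSup_empty]
    · have heq : {r : ℝ | ∃ v : V, v ≠ 0 ∧ r = |B w v| / ‖v‖} = {0} := by
        apply Set.Subset.antisymm hsub
        rintro r rfl
        obtain ⟨x, hx⟩ := h
        have := hsub hx
        simp only [Set.mem_singleton_iff] at this
        rwa [← this]
      rw [heq, csSup_singleton]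
  · apply le_antisymm
    · exact csSup_le ⟨‖p w‖, p w, hpw, by
        rw [← hp, real_inner_self_eq_norm_sq, abs_of_nonneg (by positivity), sq,
          mul_div_assoc, div_self (norm_ne_zero_iff.mpr hpw), mul_one]⟩ hub
    · apply le_csSup ⟨‖p w‖, hub⟩
      exact ⟨p w, hpw, by
        rw [← hp, real_inner_self_eq_norm_sq, abs_of_nonneg (by positivity), sq,
          mul_div_assoc, div_self (norm_ne_zero_iff.mpr hpw), mul_one]⟩

/-- If `uʰ ∈ Uʰ` satisfies Galerkin orthogonality with respect to the optimal test space
`Vʰ = p(Uʰ)` (where `p` is the Riesz map of `B`), then `uʰ` is a best approximation of `u`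
from `Uʰ` in the energy norm. -/
theorem optimal_test_space_best_approximation
    {U V : Type*} [NormedAddCommGroup U] [InnerProductSpace ℝ U] [CompleteSpace U]
    [NormedAddCommGroup V] [InnerProductSpace ℝ V] [CompleteSpace V]
    (B : U → V → ℝ)
    (hB : IsBoundedBilinearMap ℝ (fun p : U × V => B p.1 p.2))
    (hker : ∀ u : U, (∀ v : V, B u v = 0) → u = 0)
    (p : U → V) (hp : ∀ (w : U) (v : V), ⟪p w, v⟫ = B w v)
    (Uh : Submodule ℝ U) (u uh : U) (huh : uh ∈ Uh)
    (horth : ∀ wh ∈ Uh, B (u - uh) (p wh) = 0) :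
    ∀ wh ∈ Uh, energyNorm B (u - uh) ≤ energyNorm B (u - wh) := by
  intro wh hwh
  rw [energyNorm_eq_norm_riesz B p hp, energyNorm_eq_norm_riesz B p hp]
  -- p is additive on differences: p (u - wh) = p (u - uh) + p (uh - wh)
  have hadd : p (u - wh) = p (u - uh) + p (uh - wh) := by
    have : ∀ v : V, ⟪p (u - wh) - (p (u - uh) + p (uh - wh)), v⟫ = 0 := by
      intro v
      rw [inner_sub_left, inner_add_left, hp, hp, hp]
      have h1 : B (u - uh) v + B (uh - wh) v = B (u - wh) v := by
        have := hB.add_left (u - uh) (uh - wh) v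
        simpa using this.symm.trans (by ring_nf; rw [sub_add_sub_cancel])
      linarith
    have := this (p (u - wh) - (p (u - uh) + p (uh - wh)))
    rw [real_inner_self_eq_norm_sq] at this
    have hz : p (u - wh) - (p (u - uh) + p (uh - wh)) = 0 := by
      rwa [pow_eq_zero_iff (n := 2) (by norm_num), norm_eq_zero] at this
    exact sub_eq_zero.mp hz
  have horthv : ⟪p (u - uh), p (uh - wh)⟫ = 0 := by
    rw [hp]
    exact horth _ (Uh.sub_mem huh hwh)
  have key : ‖p (u - uh)‖ ^ 2 ≤ ‖p (u - uh)‖ * ‖p (u - wh)‖ := by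
    have : ⟪p (u - uh), p (u - wh)⟫ = ‖p (u - uh)‖ ^ 2 := by
      rw [hadd, inner_add_right, horthv, real_inner_self_eq_norm_sq, add_zero]
    calc ‖p (u - uh)‖ ^ 2 = ⟪p (u - uh), p (u - wh)⟫ := this.symm
      _ ≤ |⟪p (u - uh), p (u - wh)⟫| := le_abs_self _
      _ ≤ ‖p (u - uh)‖ * ‖p (u - wh)‖ := abs_real_inner_le_norm _ _
  by_cases h0 : p (u - uh) = 0
  · rw [h0, norm_zero]; positivity
  · have hpos : 0 < ‖p (u - uh)‖ := norm_pos_iff.mpr h0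
    nlinarith [key]
end

section
/- Let U, V be real Hilbert spaces, B : U × V → ℝ a bounded bilinear form, F ∈ V', and Uʰ ⊆ U, Vʰ ⊆ V closed subspaces. Suppose (uʰ, êʰ) ∈ Uʰ × Vʰ solves the saddle point system: ⟨êʰ, vʰ⟩_V + B(uʰ, vʰ) = F(vʰ) for all vʰ ∈ Vʰ, and B(wʰ, êʰ) = 0 for all wʰ ∈ Uʰ. Then uʰ is the minimizer over Uʰ of the discrete residual zʰ ↦ (1/2)‖F − B(zʰ, ·)‖²_{(Vʰ)'}, where ‖·‖_{(Vʰ)'} is the dual norm over Vʰ, and ‖êʰ‖_V = ‖F − B(uʰ,·)‖_{(Vʰ)'}. -/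
open RealInnerProductSpace

/-- The dual norm of the residual `v ↦ F v - B z v` over the discrete test space `Vʰ`. -/
noncomputable def discreteResidualNorm {U V : Type*}
    [NormedAddCommGroup U] [NormedAddCommGroup V] [InnerProductSpace ℝ V]
    (B : U → V → ℝ) (F : V →L[ℝ] ℝ) (Vh : Submodule ℝ V) (z : U) : ℝ :=
  sSup {r : ℝ | ∃ v ∈ Vh, v ≠ 0 ∧ r = |F v - B z v| / ‖v‖}

lemma resSet_bddAbove {U V : Type*}
    [NormedAddCommGroup U] [NormedSpace ℝ U] [NormedAddCommGroup V] [InnerProductSpace ℝ V]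
    (B : U → V → ℝ) (hB : IsBoundedBilinearMap ℝ (fun p : U × V => B p.1 p.2))
    (F : V →L[ℝ] ℝ) (Vh : Submodule ℝ V) (z : U) :
    BddAbove {r : ℝ | ∃ v ∈ Vh, v ≠ 0 ∧ r = |F v - B z v| / ‖v‖} := by
  obtain ⟨C, hC0, hC⟩ := hB.bound
  refine ⟨‖F‖ + C * ‖z‖, ?_⟩
  rintro r ⟨v, hv, hv0, rfl⟩
  have hvn : (0:ℝ) < ‖v‖ := norm_pos_iff.mpr hv0
  rw [div_le_iff₀ hvn]
  have h1 : |F v| ≤ ‖F‖ * ‖v‖ := by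
    have := F.le_opNorm v
    simpa [Real.norm_eq_abs] using this
  have h2 : |B z v| ≤ C * ‖z‖ * ‖v‖ := by
    have := hC z v
    simpa [Real.norm_eq_abs] using this
  have h3 : |F v - B z v| ≤ |F v| + |B z v| := by
    calc |F v - B z v| = |F v + -(B z v)| := by ring_nf
    _ ≤ |F v| + |-(B z v)| := abs_add_le _ _
    _ = |F v| + |B z v| := by rw [abs_neg]
  nlinarith

lemma resNorm_nonneg {U V : Type*}
    [NormedAddCommGroup U] [NormedSpace ℝ U] [NormedAddCommGroup V] [InnerProductSpace ℝ V]
    (B : U → V → ℝ) (hB : IsBoundedBilinearMap ℝ (fun p : U × V => B p.1 p.2))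
    (F : V →L[ℝ] ℝ) (Vh : Submodule ℝ V) (z : U) :
    0 ≤ discreteResidualNorm B F Vh z := by
  unfold discreteResidualNorm
  by_cases h : {r : ℝ | ∃ v ∈ Vh, v ≠ 0 ∧ r = |F v - B z v| / ‖v‖}.Nonempty
  · obtain ⟨r, hr⟩ := h
    have hr0 : 0 ≤ r := by
      obtain ⟨v, hv, hv0, rfl⟩ := hr
      positivity
    exact hr0.trans (le_csSup (resSet_bddAbove B hB F Vh z) hr)
  · rw [Set.not_nonempty_iff_eq_empty] at h
    rw [h, Real.sSup_empty]

/-- A solution `(uʰ, êʰ)` of the saddle point (mixed) system minimizes the discrete residual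
`zʰ ↦ (1/2)‖F − B(zʰ,·)‖²_{(Vʰ)'}` over `Uʰ`, and `‖êʰ‖ = ‖F − B(uʰ,·)‖_{(Vʰ)'}`. -/
theorem saddle_point_residual_minimization
    {U V : Type*} [NormedAddCommGroup U] [InnerProductSpace ℝ U] [CompleteSpace U]
    [NormedAddCommGroup V] [InnerProductSpace ℝ V] [CompleteSpace V]
    (B : U → V → ℝ)
    (hB : IsBoundedBilinearMap ℝ (fun p : U × V => B p.1 p.2))
    (F : V →L[ℝ] ℝ)
    (Uh : Submodule ℝ U) (Vh : Submodule ℝ V)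
    (hUh : IsClosed (Uh : Set U)) (hVh : IsClosed (Vh : Set V))
    (uh : U) (eh : V) (huh : uh ∈ Uh) (heh : eh ∈ Vh)
    (heq1 : ∀ vh ∈ Vh, ⟪eh, vh⟫ + B uh vh = F vh)
    (heq2 : ∀ wh ∈ Uh, B wh eh = 0) :
    (∀ zh ∈ Uh, (1 / 2) * (discreteResidualNorm B F Vh uh) ^ 2 ≤
      (1 / 2) * (discreteResidualNorm B F Vh zh) ^ 2) ∧
    ‖eh‖ = discreteResidualNorm B F Vh uh := by
  -- the residual of any zh ∈ Uh tested against v is ⟪eh, v⟫ + B (uh - zh) v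
  have hsub : ∀ (zh : U) (v : V), B uh v - B zh v = B (uh - zh) v := by
    intro zh v
    have := hB.add_left (uh - zh) zh v
    simp only [sub_add_cancel] at this
    linarith [this]
  -- membership of ‖eh‖ in the residual set of zh ∈ Uh, if eh ≠ 0
  have hmem : ∀ zh ∈ Uh, eh ≠ 0 →
      ‖eh‖ ∈ {r : ℝ | ∃ v ∈ Vh, v ≠ 0 ∧ r = |F v - B zh v| / ‖v‖} := by
    intro zh hzh heh0
    refine ⟨eh, heh, heh0, ?_⟩
    have h1 : F eh - B zh eh = ⟪eh, eh⟫ := by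
      have h2 := heq1 eh heh
      have h3 : B uh eh - B zh eh = B (uh - zh) eh := hsub zh eh
      have h4 : B (uh - zh) eh = 0 := heq2 _ (Uh.sub_mem huh hzh)
      linarith
    rw [h1, real_inner_self_eq_norm_sq]
    have hpos : (0:ℝ) < ‖eh‖ := norm_pos_iff.mpr heh0
    rw [abs_of_nonneg (by positivity)]
    field_simp
  -- upper bound: every element of the residual set of uh is ≤ ‖eh‖
  have hub : ∀ r ∈ {r : ℝ | ∃ v ∈ Vh, v ≠ 0 ∧ r = |F v - B uh v| / ‖v‖}, r ≤ ‖eh‖ := by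
    rintro r ⟨v, hv, hv0, rfl⟩
    have h1 : F v - B uh v = ⟪eh, v⟫ := by
      have := heq1 v hv; linarith
    rw [h1, div_le_iff₀ (norm_pos_iff.mpr hv0)]
    exact abs_real_inner_le_norm eh v
  have hnormeq : ‖eh‖ = discreteResidualNorm B F Vh uh := by
    by_cases heh0 : eh = 0
    · subst heh0
      simp only [norm_zero]
      refine le_antisymm (resNorm_nonneg B hB F Vh uh) ?_
      unfold discreteResidualNorm
      by_cases h : {r : ℝ | ∃ v ∈ Vh, v ≠ 0 ∧ r = |F v - B uh v| / ‖v‖}.Nonempty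
      · exact csSup_le h (by simpa using hub)
      · rw [Set.not_nonempty_iff_eq_empty] at h
        rw [h, Real.sSup_empty]
    · refine le_antisymm ?_ ?_
      · exact le_csSup (resSet_bddAbove B hB F Vh uh) (hmem uh huh heh0)
      · exact csSup_le ⟨_, hmem uh huh heh0⟩ hub
  refine ⟨?_, hnormeq⟩
  intro zh hzh
  have hle : discreteResidualNorm B F Vh uh ≤ discreteResidualNorm B F Vh zh := by
    rw [← hnormeq]
    by_cases heh0 : eh = 0
    · simp only [heh0, norm_zero]
      exact resNorm_nonneg B hB F Vh zh
    · exact le_csSup (resSet_bddAbove B hB F Vh zh) (hmem zh hzh heh0)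
  have h0 : 0 ≤ discreteResidualNorm B F Vh uh := resNorm_nonneg B hB F Vh uh
  nlinarith
end
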